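/- The VI-SLAM measurement function is invariant with respect to the reference-frame action α: for every S ∈ SE_{e₃}(3), every ξ ∈ 𝒯, and every index k, h^k(α(S, ξ)) = h^k(ξ); consequently h(α(S, ξ)) = h(ξ). -/

import Mathlib

noncomputable section
open Matrix

abbrev Mat3 := Matrix (Fin 3) (Fin 3) ℝ
abbrev Vec3 := EuclideanSpace ℝ (Fin 3)
abbrev Vec6 := EuclideanSpace ℝ (Fin 6)

def SO3 (R : Mat3) : Prop := Rᵀ * R = 1 ∧ R.det = 1

def e3 : Vec3 := WithLp.toLp 2 ![0, 0, 1]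

def mulv (M : Mat3) (v : Vec3) : Vec3 := WithLp.toLp 2 (M.mulVec v)

abbrev SE3 := Mat3 × Vec3

def SE3.mul (P Q : SE3) : SE3 := (P.1 * Q.1, P.2 + mulv P.1 Q.2)
def SE3.inv (P : SE3) : SE3 := (P.1ᵀ, -(mulv P.1ᵀ P.2))
def SE3.act (P : SE3) (p : Vec3) : Vec3 := mulv P.1 p + P.2

def SEe3 (S : SE3) : Prop := SO3 S.1 ∧ mulv S.1 e3 = e3

structure VIState (n : ℕ) where
  P : SE3
  v : Vec3
  b : Vec6
  T : SE3
  p : Fin n → Vec3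

def VIState.mem {n : ℕ} (ξ : VIState n) : Prop :=
  SO3 ξ.P.1 ∧ SO3 ξ.T.1 ∧ ∀ i, SE3.act (SE3.inv (SE3.mul ξ.P ξ.T)) (ξ.p i) ≠ 0

/-- The reference-frame action `α(S, ξ) := (S⁻¹P_B, R_Sᵀ v_B, b_B, T, (S⁻¹ p_i))`. -/
def alphaAct {n : ℕ} (S : SE3) (ξ : VIState n) : VIState n :=
  ⟨SE3.mul (SE3.inv S) ξ.P, mulv S.1ᵀ ξ.v, ξ.b, ξ.T,
    fun i => SE3.act (SE3.inv S) (ξ.p i)⟩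

/-- The `k`-th component of the measurement function: `h^k(ξ) = q_k/|q_k|`
with `q_k = (P_B T)⁻¹ p_k`. -/
def hComp {n : ℕ} (ξ : VIState n) (k : Fin n) : Vec3 :=
  ‖SE3.act (SE3.inv (SE3.mul ξ.P ξ.T)) (ξ.p k)‖⁻¹ •
    SE3.act (SE3.inv (SE3.mul ξ.P ξ.T)) (ξ.p k)

/-- The full measurement function `h(ξ) = (h¹(ξ), …, hⁿ(ξ))`. -/
def hMeas {n : ℕ} (ξ : VIState n) : Fin n → Vec3 := fun k => hComp ξ k

/- The camera-frame point `q_k = (P_B T)⁻¹ p_k` sees `P_B` and `p_k` only through their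
coordinates relative to each other; `α` moves both by the same rigid motion `S⁻¹`, which cancels
because `R_S` is orthogonal. -/

lemma mulv_mul (A B : Mat3) (v : Vec3) : mulv (A * B) v = mulv A (mulv B v) := by
  simp [mulv, ← Matrix.mulVec_mulVec]

lemma mulv_add (A : Mat3) (v w : Vec3) : mulv A (v + w) = mulv A v + mulv A w := by
  simp [mulv, Matrix.mulVec_add]

lemma mulv_neg (A : Mat3) (v : Vec3) : mulv A (-v) = -mulv A v := by
  simp [mulv, Matrix.mulVec_neg]

lemma mulv_one (v : Vec3) : mulv 1 v = v := by
  simp [mulv]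

lemma SO3.mul_transpose_self {R : Mat3} (hR : SO3 R) : R * Rᵀ = 1 :=
  mul_eq_one_comm.mp hR.1

namespace SE3

lemma mul_assoc (P Q S : SE3) : mul (mul P Q) S = mul P (mul Q S) := by
  simp only [mul, Matrix.mul_assoc, mulv_add, mulv_mul, add_assoc]

lemma act_inv_mul {P Q : SE3} (hP : P.1ᵀ * P.1 = 1) (p : Vec3) :
    act (inv (mul P Q)) p = act (inv Q) (act (inv P) p) := by
  simp only [act, inv, mul, Matrix.transpose_mul, mulv_add, mulv_neg, mulv_mul, ← mulv_mul P.1ᵀ,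
    hP, mulv_one]
  abel

lemma act_inv_inv_act_inv {S : SE3} (hS : S.1 * S.1ᵀ = 1) (p : Vec3) :
    act (inv (inv S)) (act (inv S) p) = p := by
  simp only [act, inv, Matrix.transpose_transpose, mulv_add, mulv_neg, neg_neg, ← mulv_mul, hS,
    mulv_one]
  abel

end SE3

/-- The camera-frame point `q_k` of the measurement `h^k`. -/
def VIState.camPoint {n : ℕ} (ξ : VIState n) (k : Fin n) : Vec3 :=
  SE3.act (SE3.inv (SE3.mul ξ.P ξ.T)) (ξ.p k)

lemma hComp_eq_camPoint {n : ℕ} (ξ : VIState n) (k : Fin n) :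
    hComp ξ k = ‖ξ.camPoint k‖⁻¹ • ξ.camPoint k := by
  rfl

lemma camPoint_alphaAct {n : ℕ} {S : SE3} (hS : S.1 * S.1ᵀ = 1) (ξ : VIState n) (k : Fin n) :
    (alphaAct S ξ).camPoint k = ξ.camPoint k := by
  have hSinv : (SE3.inv S).1ᵀ * (SE3.inv S).1 = 1 := by
    simpa [SE3.inv] using hS
  simp only [VIState.camPoint, alphaAct, SE3.mul_assoc, SE3.act_inv_mul hSinv,
    SE3.act_inv_inv_act_inv hS]

theorem measurement_invariant_under_alpha_general (n : ℕ)
    (S : SE3) (ξ : VIState n) (hS : SEe3 S) :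
    (∀ k : Fin n, hComp (alphaAct S ξ) k = hComp ξ k) ∧
    hMeas (alphaAct S ξ) = hMeas ξ := by
  have hk : ∀ k : Fin n, hComp (alphaAct S ξ) k = hComp ξ k := fun k => by
    rw [hComp_eq_camPoint, hComp_eq_camPoint, camPoint_alphaAct hS.1.mul_transpose_self]
  exact ⟨hk, funext hk⟩

/-- The VI-SLAM measurement function is invariant with respect to the
reference-frame action `α`: `h^k(α(S,ξ)) = h^k(ξ)` for every `k`, and consequently
`h(α(S,ξ)) = h(ξ)`. -/
theorem measurement_invariant_under_alpha (n : ℕ) (hn : 1 ≤ n)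
    (S : SE3) (ξ : VIState n) (hS : SEe3 S) (hξ : ξ.mem) :
    (∀ k : Fin n, hComp (alphaAct S ξ) k = hComp ξ k) ∧
    hMeas (alphaAct S ξ) = hMeas ξ :=
  measurement_invariant_under_alpha_general n S ξ hS
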